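/- arXiv:1609.02345 — 2 statements merged into one kernel-verified Lean document; each statement's English description precedes it below -/
import Mathlib

section
/- Let ω : ℝ^{n−1} → ℝ be Lipschitz with constant A, and let Ω = {(x', x_n) : x_n > ω(x')}. For x = (x', x_n) with x_n < ω(x') (i.e. x outside the closure of Ω), define the reflected point x̃ = (x', 2ω(x') − x_n). Then x̃ ∈ Ω, and there exists a constant B > 0 depending only on A such that |x̃ − y| ≤ B·|x − y| for all y ∈ Ω. -/
theorem reflection_into_domain (m : ℕ) (A : ℝ) (hA : 0 < A)
    (ω : EuclideanSpace ℝ (Fin m) → ℝ)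
    (hLip : ∀ x' y', |ω x' - ω y'| ≤ A * ‖x' - y'‖)
    (Ω : Set (EuclideanSpace ℝ (Fin m) × ℝ))
    (hΩ : Ω = {p | ω p.1 < p.2}) :
    ∃ B > 0, ∀ x : EuclideanSpace ℝ (Fin m) × ℝ, x.2 < ω x.1 →
      (x.1, 2 * ω x.1 - x.2) ∈ Ω ∧
      ∀ y ∈ Ω, dist ((x.1, 2 * ω x.1 - x.2) : EuclideanSpace ℝ (Fin m) × ℝ) y ≤ B * dist x y := by
  refine ⟨2 * A + 2, by linarith, fun x hx => ⟨by simp [hΩ]; linarith, fun y hy => ?_⟩⟩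
  rw [hΩ] at hy
  have hy' : ω y.1 < y.2 := hy
  rw [Prod.dist_eq, Prod.dist_eq, Real.dist_eq, Real.dist_eq]
  have h1 : |ω x.1 - ω y.1| ≤ A * dist x.1 y.1 := by
    rw [dist_eq_norm]; exact hLip _ _
  set d1 := dist x.1 y.1 with hd1def
  set d := max d1 |x.2 - y.2| with hddef
  have hd1 : d1 ≤ d := le_max_left _ _
  have hd2 : |x.2 - y.2| ≤ d := le_max_right _ _
  have hd0 : 0 ≤ d1 := dist_nonneg
  have h1' := abs_le.mp h1
  have h2' := abs_le.mp (le_refl |x.2 - y.2|) |>.1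
  have h2'' : -(|x.2 - y.2|) ≤ x.2 - y.2 := neg_abs_le _
  have h2''' : x.2 - y.2 ≤ |x.2 - y.2| := le_abs_self _
  apply max_le
  · nlinarith
  · rw [abs_le]
    obtain ⟨h1a, h1b⟩ := h1'
    have hd : 0 ≤ d := le_trans hd0 hd1
    have hAd : A * d1 ≤ A * d := mul_le_mul_of_nonneg_left hd1 (le_of_lt hA)
    have hAd0 : 0 ≤ A * d := mul_nonneg (le_of_lt hA) hd
    constructor <;> simp only <;> nlinarith
end

section
/- Let s : ℝⁿ → ℝ be locally log-Hölder continuous, i.e. there is c > 0 with |s(x) − s(y)| ≤ c / log(e + 1/|x−y|) for all x ≠ y, and assume s is bounded. Then the sequence w_j(x) = 2^{j·s(x)} is an admissible weight sequence: there exist α ≥ 0 and a constant C > 0 such that 2^{j s(x)} ≤ C · 2^{j s(y)} · (1 + 2^j|x−y|)^α for all j ∈ ℕ and x, y ∈ ℝⁿ, and 2^{s⁻} w_j(x) ≤ w_{j+1}(x) ≤ 2^{s⁺} w_j(x) where s⁻ = inf s, s⁺ = sup s. -/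
theorem variable_smoothness_weight_admissible (n : ℕ) (s : EuclideanSpace ℝ (Fin n) → ℝ)
    (c : ℝ) (hc : 0 < c)
    (hlog : ∀ x y, x ≠ y → |s x - s y| ≤ c / Real.log (Real.exp 1 + 1 / dist x y))
    (sm sM : ℝ) (hsm : ∀ x, sm ≤ s x) (hsM : ∀ x, s x ≤ sM) :
    ∃ α ≥ (0 : ℝ), ∃ C > (0 : ℝ),
      (∀ j : ℕ, ∀ x y : EuclideanSpace ℝ (Fin n),
        (2 : ℝ) ^ ((j : ℝ) * s x) ≤
          C * (2 : ℝ) ^ ((j : ℝ) * s y) * (1 + 2 ^ j * dist x y) ^ α) ∧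
      (∀ j : ℕ, ∀ x : EuclideanSpace ℝ (Fin n),
        (2 : ℝ) ^ sm * (2 : ℝ) ^ ((j : ℝ) * s x) ≤ (2 : ℝ) ^ (((j : ℝ) + 1) * s x) ∧
        (2 : ℝ) ^ (((j : ℝ) + 1) * s x) ≤ (2 : ℝ) ^ sM * (2 : ℝ) ^ ((j : ℝ) * s x)) := by
  have hα : (0:ℝ) ≤ sM - sm := by
    have h := (hsm 0).trans (hsM 0); linarith
  refine ⟨sM - sm, hα, Real.exp c, Real.exp_pos c, ?_, ?_⟩
  · intro j x y
    by_cases hxy : x = y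
    · subst hxy
      simp only [dist_self, mul_zero, add_zero, Real.one_rpow]
      have h1 : (1:ℝ) ≤ Real.exp c := Real.one_le_exp hc.le
      nlinarith [Real.rpow_pos_of_pos (by norm_num : (0:ℝ) < 2) ((j:ℝ) * s x)]
    · set d := dist x y with hd
      have hd0 : 0 < d := dist_pos.mpr hxy
      have h1pos : (0:ℝ) < 1 + 2^j * d := by positivity
      have hprod : (0:ℝ) ≤ 2^j * d := by positivity
      have hlog1 : 0 ≤ Real.log (1 + 2^j * d) := Real.log_nonneg (by linarith)
      have hkey : (j:ℝ) * (s x - s y) * Real.log 2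
          ≤ (sM - sm) * Real.log (1 + 2^j * d) + c := by
        rcases le_or_gt (s x) (s y) with h | h
        · have h0 : 0 ≤ (j:ℝ) * (s y - s x) * Real.log 2 :=
            mul_nonneg (mul_nonneg (Nat.cast_nonneg j) (by linarith))
              (Real.log_pos (by norm_num)).le
          have heq : (j:ℝ) * (s x - s y) * Real.log 2
              = -((j:ℝ) * (s y - s x) * Real.log 2) := by ring
          have h2 : 0 ≤ (sM - sm) * Real.log (1 + 2^j * d) := mul_nonneg hα hlog1
          rw [heq]; linarith
        · set D := s x - s y with hD
          have hDpos : 0 < D := by simp [hD]; linarith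
          have hDabs : |s x - s y| = D := abs_of_pos hDpos
          have hDle : D ≤ sM - sm := by
            have := hsM x; have := hsm y; simp [hD]; linarith
          -- split j log 2 = log (2^j d) + log (1/d)
          have hsplit : (j:ℝ) * Real.log 2 = Real.log (2^j * d) + Real.log (1/d) := by
            rw [Real.log_mul (by positivity) hd0.ne', Real.log_div one_ne_zero hd0.ne',
              Real.log_pow]
            simp
          have hterm1 : D * Real.log (2^j * d) ≤ (sM - sm) * Real.log (1 + 2^j * d) := by
            rcases le_or_gt (Real.log (2^j * d)) 0 with hl | hl
            · have ha : D * Real.log (2^j * d) ≤ 0 :=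
                mul_nonpos_of_nonneg_of_nonpos hDpos.le hl
              have hb : 0 ≤ (sM - sm) * Real.log (1 + 2^j * d) := mul_nonneg hα hlog1
              linarith
            · have hle : Real.log (2^j * d) ≤ Real.log (1 + 2^j * d) :=
                Real.log_le_log (by positivity) (by linarith)
              nlinarith
          have hterm2 : D * Real.log (1/d) ≤ c := by
            rcases le_or_gt (Real.log (1/d)) 0 with hl | hl
            · nlinarith
            · have he : (0:ℝ) < Real.log (Real.exp 1 + 1/d) := by
                apply Real.log_pos
                have : (1:ℝ) < Real.exp 1 := by
                  have := Real.exp_one_gt_d9; linarith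
                have : (0:ℝ) < 1/d := by positivity
                linarith
              have hle : Real.log (1/d) ≤ Real.log (Real.exp 1 + 1/d) :=
                Real.log_le_log (by positivity) (by linarith [Real.exp_pos 1])
              have hD' : D ≤ c / Real.log (Real.exp 1 + 1/d) := by
                rw [← hDabs]; exact hlog x y hxy
              have hfin : D * Real.log (Real.exp 1 + 1/d) ≤ c :=
                calc D * Real.log (Real.exp 1 + 1/d)
                    ≤ (c / Real.log (Real.exp 1 + 1/d)) * Real.log (Real.exp 1 + 1/d) :=
                      mul_le_mul_of_nonneg_right hD' he.le
                  _ = c := div_mul_cancel₀ c he.ne'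
              have hmono : D * Real.log (1/d) ≤ D * Real.log (Real.exp 1 + 1/d) :=
                mul_le_mul_of_nonneg_left hle hDpos.le
              linarith
          calc (j:ℝ) * D * Real.log 2 = D * ((j:ℝ) * Real.log 2) := by ring
            _ = D * Real.log (2^j * d) + D * Real.log (1/d) := by rw [hsplit]; ring
            _ ≤ (sM - sm) * Real.log (1 + 2^j * d) + c := add_le_add hterm1 hterm2
      have hL : (2:ℝ)^((j:ℝ) * s x)
          = (2:ℝ)^((j:ℝ) * s y) * Real.exp ((j:ℝ) * (s x - s y) * Real.log 2) := by
        rw [Real.rpow_def_of_pos (by norm_num : (0:ℝ) < 2),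
          Real.rpow_def_of_pos (by norm_num : (0:ℝ) < 2), ← Real.exp_add]
        ring_nf
      have hR : Real.exp c * (2:ℝ)^((j:ℝ) * s y) * (1 + 2^j * d)^(sM - sm)
          = (2:ℝ)^((j:ℝ) * s y) * Real.exp ((sM - sm) * Real.log (1 + 2^j * d) + c) := by
        rw [Real.rpow_def_of_pos h1pos, Real.exp_add]
        ring
      rw [hL, hR]
      exact mul_le_mul_of_nonneg_left (Real.exp_le_exp.mpr hkey)
        (Real.rpow_nonneg (by norm_num) _)
  · intro j x
    have h2 : (2:ℝ)^(((j:ℝ)+1) * s x) = (2:ℝ)^(s x) * (2:ℝ)^((j:ℝ) * s x) := by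
      rw [← Real.rpow_add (by norm_num : (0:ℝ) < 2)]
      ring_nf
    have hpos : 0 ≤ (2:ℝ)^((j:ℝ) * s x) := Real.rpow_nonneg (by norm_num) _
    constructor
    · rw [h2]
      exact mul_le_mul_of_nonneg_right
        ((Real.rpow_le_rpow_left_iff (by norm_num : (1:ℝ) < 2)).mpr (hsm x)) hpos
    · rw [h2]
      exact mul_le_mul_of_nonneg_right
        ((Real.rpow_le_rpow_left_iff (by norm_num : (1:ℝ) < 2)).mpr (hsM x)) hpos
end
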